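/- arXiv:1911.12508 — 3 statements merged into one kernel-verified Lean document; each statement's English description precedes it below -/
import Mathlib

section
/- Let A be an n×n Hermitian matrix with eigenvalues λ_1(A),…,λ_n(A) and corresponding orthonormal eigenvectors v_1,…,v_n, where v_{i,j} denotes the j-th component of v_i. Let M_j be the (n−1)×(n−1) principal submatrix of A obtained by deleting the j-th row and j-th column, with eigenvalues λ_1(M_j),…,λ_{n−1}(M_j). Then for all i, j: |v_{i,j}|² · ∏_{k=1, k≠i}^n (λ_i(A) − λ_k(A)) = ∏_{k=1}^{n−1} (λ_i(A) − λ_k(M_j)). -/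
open Matrix

/-! Both sides equal the diagonal entry `adj(λᵢ - A)ⱼⱼ`. By cofactor expansion this entry is
`det(λᵢ - Mⱼ) = ∏ₖ (λᵢ - λₖ(Mⱼ))`. On the other hand, conjugating by the unitary matrix `U`
of eigenvectors gives `adj(z - A) = U · adj(diag(z - λ)) · U*`, whose `(j, j)` entry is
`∑ₖ |vₖⱼ|² ∏_{l ≠ k} (z - λₗ)`; at `z = λᵢ` only the term `k = i` survives. -/

namespace Matrix

theorem submatrix_scalar_sub {m n R : Type*} [Fintype m] [DecidableEq m] [Fintype n]
    [DecidableEq n] [Ring R] {f : m → n} (hf : Function.Injective f) (z : R) (A : Matrix n n R) :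
    (scalar n z - A).submatrix f f = scalar m z - A.submatrix f f := by
  ext a b
  simp [diagonal_apply, hf.eq_iff]

section Adjugate

variable {n R : Type*} [Fintype n] [DecidableEq n] [CommRing R]

theorem adjugate_eq_det_smul_of_mul_eq_one {U V : Matrix n n R} (h : U * V = 1) :
    adjugate U = det U • V := by
  calc adjugate U = adjugate U * U * V := by rw [mul_assoc, h, mul_one]
    _ = det U • V := by rw [adjugate_mul, smul_mul, one_mul]

theorem adjugate_mul_mul_of_mul_eq_one {U V : Matrix n n R} (h : U * V = 1) (B : Matrix n n R) :
    adjugate (U * B * V) = U * adjugate B * V := by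
  have hdet : det U * det V = 1 := by rw [← det_mul, h, det_one]
  rw [adjugate_mul_distrib, adjugate_mul_distrib, adjugate_eq_det_smul_of_mul_eq_one h,
    adjugate_eq_det_smul_of_mul_eq_one (mul_eq_one_comm.mp h)]
  simp only [Matrix.smul_mul, Matrix.mul_smul, smul_smul, hdet, one_smul, mul_assoc]

theorem adjugate_fin_succ_apply_self {m : ℕ} (A : Matrix (Fin (m + 1)) (Fin (m + 1)) R)
    (j : Fin (m + 1)) : adjugate A j j = det (A.submatrix j.succAbove j.succAbove) := by
  rw [adjugate_fin_succ_eq_det_submatrix, (Even.add_self (j : ℕ)).neg_one_pow, one_mul]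

end Adjugate

namespace IsHermitian

variable {n 𝕜 : Type*} [Fintype n] [DecidableEq n] [RCLike 𝕜] {A : Matrix n n 𝕜}

theorem det_scalar_sub (hA : A.IsHermitian) (z : 𝕜) :
    det (scalar n z - A) = ∏ k, (z - hA.eigenvalues k) := by
  rw [← eval_charpoly, hA.charpoly_eq, Polynomial.eval_prod]
  simp

theorem scalar_sub_eq (hA : A.IsHermitian) (z : 𝕜) :
    scalar n z - A = (hA.eigenvectorUnitary : Matrix n n 𝕜) *
      diagonal (fun k => z - hA.eigenvalues k) *
        star (hA.eigenvectorUnitary : Matrix n n 𝕜) := by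
  set U : Matrix n n 𝕜 := (hA.eigenvectorUnitary : Matrix n n 𝕜)
  have hU : U * star U = 1 := Unitary.mul_star_self_of_mem hA.eigenvectorUnitary.2
  have hdiag : diagonal (fun k => z - hA.eigenvalues k) =
      scalar n z - diagonal (RCLike.ofReal ∘ hA.eigenvalues) := by
    rw [scalar_apply, diagonal_sub]
    rfl
  rw [hdiag, Matrix.mul_sub, Matrix.sub_mul, ← (scalar_commute z (fun _ => Commute.all _ _) U).eq,
    mul_assoc, hU, mul_one]
  conv_lhs => rw [hA.spectral_theorem, Unitary.conjStarAlgAut_apply]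

theorem adjugate_scalar_sub_apply_self (hA : A.IsHermitian) (z : 𝕜) (j : n) :
    (scalar n z - A).adjugate j j =
      ∑ k, (‖hA.eigenvectorBasis k j‖ ^ 2 : ℝ) *
        ∏ l ∈ Finset.univ.erase k, (z - hA.eigenvalues l) := by
  have hU : (hA.eigenvectorUnitary : Matrix n n 𝕜) *
      star (hA.eigenvectorUnitary : Matrix n n 𝕜) = 1 :=
    Unitary.mul_star_self_of_mem hA.eigenvectorUnitary.2
  rw [hA.scalar_sub_eq z, adjugate_mul_mul_of_mul_eq_one hU, adjugate_diagonal, mul_apply]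
  refine Finset.sum_congr rfl fun k _ => ?_
  rw [mul_diagonal, star_apply, eigenvectorUnitary_apply, mul_right_comm, RCLike.star_def,
    RCLike.mul_conj, RCLike.ofReal_pow]

theorem adjugate_eigenvalue_sub_apply_self (hA : A.IsHermitian) (i j : n) :
    (scalar n (hA.eigenvalues i : 𝕜) - A).adjugate j j =
      (‖hA.eigenvectorBasis i j‖ ^ 2 : ℝ) *
        ∏ k ∈ Finset.univ.erase i, ((hA.eigenvalues i : 𝕜) - hA.eigenvalues k) := by
  rw [hA.adjugate_scalar_sub_apply_self, Finset.sum_eq_single_of_mem i (Finset.mem_univ i)]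
  intro k _ hki
  rw [Finset.prod_eq_zero (Finset.mem_erase.2 ⟨Ne.symm hki, Finset.mem_univ i⟩) (sub_self _),
    mul_zero]

end IsHermitian

end Matrix

/-- Eigenvector-eigenvalue identity: for an (n+1)×(n+1) Hermitian matrix `A`,
`|v_{i,j}|² ∏_{k≠i} (λ_i(A) - λ_k(A)) = ∏_k (λ_i(A) - λ_k(M_j))`,
where `M_j` is the principal submatrix deleting row and column `j`. -/
theorem eigenvector_eigenvalue_identity (n : ℕ)
    (A : Matrix (Fin (n + 1)) (Fin (n + 1)) ℂ) (hA : A.IsHermitian)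
    (i j : Fin (n + 1)) :
    ‖hA.eigenvectorBasis i j‖ ^ 2 *
        ∏ k ∈ Finset.univ.erase i, (hA.eigenvalues i - hA.eigenvalues k) =
      ∏ k : Fin n,
        (hA.eigenvalues i - (hA.submatrix j.succAbove).eigenvalues k) := by
  have h := hA.adjugate_eigenvalue_sub_apply_self i j
  rw [adjugate_fin_succ_apply_self, submatrix_scalar_sub Fin.succAbove_right_injective,
    (hA.submatrix j.succAbove).det_scalar_sub, RCLike.ofReal_eq_complex_ofReal] at h
  exact_mod_cast h.symm
end

section
/- Let A be an n×n Hermitian matrix with 0 as an eigenvalue, with orthonormal eigenvectors v_1,…,v_n ordered so that Av_n = 0, and eigenvalues λ_1,…,λ_{n−1}, λ_n = 0. Let M_n be the principal submatrix obtained by deleting the last row and column of A, and let v_{n,n} be the last component of v_n. Then det(M_n) = |v_{n,n}|² · ∏_{k=1}^{n−1} λ_k. -/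
/-!
Deleting the last row and column of `A` computes a cofactor, so `det M_n = (adj A)_{n,n}`.
Writing `A = U D Uᴴ` with `U` unitary, `adj A = U (adj D) Uᴴ`, where `adj D` is diagonal with
entries `∏_{j ≠ i} λ_j`. These vanish except at the index `i₀` of the zero eigenvalue, where the
entry is `∏_k λ_k`; hence `det M_n = |U_{n,i₀}|² ∏_k λ_k`. When this product is nonzero, `0` is a
simple eigenvalue, so `v` is a unit multiple of the `i₀`-th column of `U` and `|v_n| = |U_{n,i₀}|`.
-/

open Matrix Polynomial

theorem Finset.map_val_erase_eq_of_map_val_eq_cons {ι α : Type*} [DecidableEq ι]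
    {t : Finset ι} {f : ι → α} {a : α} {s : Multiset α} {i : ι}
    (h : t.val.map f = a ::ₘ s) (hi : i ∈ t) (hfi : f i = a) : (t.erase i).val.map f = s := by
  rw [← Multiset.cons_inj_right a, ← h, ← hfi, ← Multiset.map_cons, Finset.erase_val,
    Multiset.cons_erase hi]

namespace Matrix

theorem det_submatrix_castSucc_eq_adjugate_last {R : Type*} [CommRing R] {n : ℕ}
    (A : Matrix (Fin (n + 1)) (Fin (n + 1)) R) :
    (A.submatrix Fin.castSucc Fin.castSucc).det = adjugate A (Fin.last n) (Fin.last n) := by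
  rw [adjugate_fin_succ_eq_det_submatrix, Fin.succAbove_last, ← two_mul, pow_mul, neg_one_sq,
    one_pow, one_mul]

variable {m : Type*} [Fintype m] [DecidableEq m]

theorem adjugate_mul_mul_star_of_mem_unitaryGroup {R : Type*} [CommRing R] [StarRing R]
    {U : Matrix m m R} (hU : U ∈ unitaryGroup m R) (B : Matrix m m R) :
    adjugate (U * B * star U) = U * adjugate B * star U := by
  have adjugate_eq {V W : Matrix m m R} (h : W * V = 1) : adjugate V = V.det • W := by
    rw [← one_mul (adjugate V), ← h, mul_assoc, mul_adjugate, mul_smul_one]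
  have hUU := Unitary.star_mul_self_of_mem hU
  have hUU' := Unitary.mul_star_self_of_mem hU
  rw [adjugate_mul_distrib, adjugate_mul_distrib, adjugate_eq hUU, adjugate_eq hUU']
  simp only [Matrix.smul_mul, Matrix.mul_smul, smul_smul, ← det_mul, hUU', det_one, one_smul,
    mul_assoc]

namespace IsHermitian

variable {𝕜 : Type*} [RCLike 𝕜] {A : Matrix m m 𝕜} (hA : A.IsHermitian)
include hA

theorem adjugate_apply_self_of_eigenvalues_eq_zero {i₀ : m} (h₀ : hA.eigenvalues i₀ = 0)
    (k : m) :
    A.adjugate k k =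
      (‖hA.eigenvectorBasis i₀ k‖ ^ 2 : ℝ) *
        ∏ j ∈ Finset.univ.erase i₀, (hA.eigenvalues j : 𝕜) := by
  set U : Matrix m m 𝕜 := (hA.eigenvectorUnitary : Matrix m m 𝕜)
  have hspec : A = U * diagonal (RCLike.ofReal ∘ hA.eigenvalues) * star U := hA.spectral_theorem
  conv_lhs => rw [hspec, adjugate_mul_mul_star_of_mem_unitaryGroup hA.eigenvectorUnitary.2,
    adjugate_diagonal, mul_apply]
  simp only [mul_diagonal]
  rw [Finset.sum_eq_single i₀]
  · simp only [eigenvectorUnitary_apply, star_apply, Function.comp_apply]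
    rw [mul_right_comm, RCLike.star_def, RCLike.mul_conj, RCLike.ofReal_pow]
  · intro i _ hi
    have hi₀ : i₀ ∈ Finset.univ.erase i := Finset.mem_erase.2 ⟨Ne.symm hi, Finset.mem_univ i₀⟩
    rw [Finset.prod_eq_zero hi₀ (by simp [h₀]), mul_zero, zero_mul]
  · simp

theorem exists_eq_smul_eigenvectorBasis_of_mulVec_eq_zero {i₀ : m}
    (hne : ∀ j, j ≠ i₀ → hA.eigenvalues j ≠ 0) {v : m → 𝕜} (hv : A *ᵥ v = 0) :
    ∃ c : 𝕜, v = c • ⇑(hA.eigenvectorBasis i₀) := by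
  set U : Matrix m m 𝕜 := (hA.eigenvectorUnitary : Matrix m m 𝕜)
  set D : Matrix m m 𝕜 := diagonal (RCLike.ofReal ∘ hA.eigenvalues)
  have hspec : A = U * D * star U := hA.spectral_theorem
  have hUU : star U * U = 1 := Unitary.coe_star_mul_self _
  have hUU' : U * star U = 1 := Unitary.coe_mul_star_self _
  set c := star U *ᵥ v
  have hdiag : D *ᵥ c = 0 := by
    have hcomm : star U * A = D * star U := by
      rw [hspec, ← mul_assoc, ← mul_assoc, hUU, one_mul]
    rw [mulVec_mulVec, ← hcomm, ← mulVec_mulVec, hv, mulVec_zero]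
  have hc : ∀ j, j ≠ i₀ → c j = 0 := fun j hj => by
    simpa [D, mulVec_diagonal, hne j hj] using congrFun hdiag j
  have hvc : v = U *ᵥ c := by rw [mulVec_mulVec, hUU', one_mulVec]
  refine ⟨c i₀, funext fun k => ?_⟩
  rw [hvc, mulVec, dotProduct,
    Finset.sum_eq_single i₀ (fun j _ hj => by rw [hc j hj, mul_zero]) (by simp)]
  simp [U, mul_comm]

theorem norm_sq_apply_eq_of_mulVec_eq_zero {i₀ : m}
    (hne : ∀ j, j ≠ i₀ → hA.eigenvalues j ≠ 0) {v : m → 𝕜} (hv : A *ᵥ v = 0) (k : m) :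
    ‖v k‖ ^ 2 = ‖hA.eigenvectorBasis i₀ k‖ ^ 2 * ∑ j, ‖v j‖ ^ 2 := by
  obtain ⟨c, rfl⟩ := hA.exists_eq_smul_eigenvectorBasis_of_mulVec_eq_zero hne hv
  have hunit : ∑ j, ‖hA.eigenvectorBasis i₀ j‖ ^ 2 = 1 := by
    rw [← EuclideanSpace.norm_sq_eq, hA.eigenvectorBasis.norm_eq_one, one_pow]
  simp only [Pi.smul_apply, smul_eq_mul, norm_mul, mul_pow, ← Finset.mul_sum, hunit]
  ring

theorem exists_eigenvalues_eq_zero_map_val_erase {ι : Type*} [Fintype ι] (l : ι → ℝ)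
    (hchar : A.charpoly = X * ∏ k, (X - C (l k : 𝕜))) :
    ∃ i₀, hA.eigenvalues i₀ = 0 ∧
      (Finset.univ.erase i₀).val.map hA.eigenvalues = Finset.univ.val.map l := by
  have hroots : Finset.univ.val.map hA.eigenvalues = 0 ::ₘ Finset.univ.val.map l := by
    apply Multiset.map_injective (RCLike.ofReal_injective (K := 𝕜))
    have hq : ∏ k, (X - C (l k : 𝕜)) ≠ 0 :=
      Finset.prod_ne_zero_iff.2 fun k _ => X_sub_C_ne_zero _
    have h := hA.roots_charpoly_eq_eigenvalues
    rw [hchar, roots_mul (mul_ne_zero X_ne_zero hq), roots_X, roots_prod _ _ hq] at h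
    simpa [Multiset.map_map, roots_X_sub_C] using h.symm
  obtain ⟨i₀, -, h₀⟩ := Multiset.mem_map.1 (hroots ▸ Multiset.mem_cons_self _ _)
  exact ⟨i₀, h₀, Finset.map_val_erase_eq_of_map_val_eq_cons hroots (Finset.mem_univ _) h₀⟩

end IsHermitian
end Matrix

/-- If `A` is Hermitian with eigenvalues `λ_1,…,λ_n, 0` (with multiplicity),
and `v` is a unit eigenvector for the eigenvalue `0`, then the determinant of
the top-left principal submatrix `M_n` equals `|v_{n,n}|² ∏ λ_k`. -/
theorem det_submatrix_eq_sq_mul_prod (n : ℕ)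
    (A : Matrix (Fin (n + 1)) (Fin (n + 1)) ℂ) (hA : A.IsHermitian)
    (l : Fin n → ℝ)
    (hchar : A.charpoly = X * ∏ k : Fin n, (X - C (l k : ℂ)))
    (v : Fin (n + 1) → ℂ)
    (hv : A *ᵥ v = 0)
    (hnorm : ∑ i, ‖v i‖ ^ 2 = 1) :
    (A.submatrix Fin.castSucc Fin.castSucc).det =
      ((‖v (Fin.last n)‖ ^ 2 : ℝ) : ℂ) * ∏ k : Fin n, (l k : ℂ) := by
  obtain ⟨i₀, h₀, herase⟩ := hA.exists_eigenvalues_eq_zero_map_val_erase l hchar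
  have hprod : ∏ j ∈ Finset.univ.erase i₀, (hA.eigenvalues j : ℂ) = ∏ k, (l k : ℂ) := by
    calc ∏ j ∈ Finset.univ.erase i₀, (hA.eigenvalues j : ℂ)
        = (((Finset.univ.erase i₀).val.map hA.eigenvalues).map (↑)).prod := by
          rw [Multiset.map_map]; rfl
      _ = ∏ k, (l k : ℂ) := by rw [herase, Multiset.map_map]; rfl
  rw [det_submatrix_castSucc_eq_adjugate_last, hA.adjugate_apply_self_of_eigenvalues_eq_zero h₀,
    RCLike.ofReal_eq_complex_ofReal, hprod]
  by_cases hP : ∏ k, (l k : ℂ) = 0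
  · rw [hP, mul_zero, mul_zero]
  have hne : ∀ j, j ≠ i₀ → hA.eigenvalues j ≠ 0 := by
    intro j hj hj₀
    have hmem : hA.eigenvalues j ∈ Finset.univ.val.map l :=
      herase ▸ Multiset.mem_map_of_mem _ (Finset.mem_erase.2 ⟨hj, Finset.mem_univ j⟩)
    obtain ⟨k, -, hk⟩ := Multiset.mem_map.1 hmem
    exact hP (Finset.prod_eq_zero (Finset.mem_univ k) (by simp [hk, hj₀]))
  rw [hA.norm_sq_apply_eq_of_mulVec_eq_zero hne hv, hnorm, mul_one]
end

section
/- Let A be an n×n Hermitian matrix with eigenvalue 0, diagonalized as A = U Λ U* with U unitary and Λ = diag(λ_1,…,λ_{n−1},0), and let M_n be the top-left (n−1)×(n−1) submatrix of A. Then det(M_n) = (∏_{k=1}^{n−1} λ_k) · det(U_n U_n*), where U_n is the top-left (n−1)×(n−1) block of U. -/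
open Matrix

/-!
Writing `A = U Λ Uᴴ`, the vanishing last eigenvalue kills the last column of `U` in the
product, so `A = U' diag(λ) U'ᴴ` with `U'` the first `n` columns of `U`. Restricting to the
first `n` rows gives `M_n = U_n diag(λ) U_nᴴ`, and the determinant is multiplicative.
-/

namespace Matrix

variable {m o R : Type*} [CommRing R] {n : ℕ}

theorem mul_diagonal_snoc_zero_mul (P : Matrix m (Fin (n + 1)) R)
    (Q : Matrix (Fin (n + 1)) o R) (d : Fin n → R) :
    P * diagonal (Fin.snoc d 0) * Q =
      P.submatrix id Fin.castSucc * diagonal d * Q.submatrix Fin.castSucc id := by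
  ext i j
  simp only [mul_apply, diagonal_apply, mul_ite, mul_zero, Finset.sum_ite_eq', Finset.mem_univ,
    if_true, Fin.sum_univ_castSucc, Fin.snoc_castSucc, Fin.snoc_last, submatrix_apply, id,
    zero_mul, add_zero]

theorem eq_mul_mul_conjTranspose_of_unitary [Fintype m] [DecidableEq m] [StarRing R]
    {A U D : Matrix m m R}
    (hU : U ∈ unitaryGroup m R) (hD : Uᴴ * A * U = D) : A = U * D * Uᴴ := by
  have hUU : U * Uᴴ = 1 := mem_unitaryGroup_iff.mp hU
  calc A = (U * Uᴴ) * A * (U * Uᴴ) := by rw [hUU, Matrix.one_mul, Matrix.mul_one]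
    _ = U * (Uᴴ * A * U) * Uᴴ := by simp only [Matrix.mul_assoc]
    _ = U * D * Uᴴ := by rw [hD]

end Matrix

theorem det_topLeft_block_general (n : ℕ)
    (A U : Matrix (Fin (n + 1)) (Fin (n + 1)) ℂ)
    (hU : U ∈ Matrix.unitaryGroup (Fin (n + 1)) ℂ)
    (l : Fin n → ℝ)
    (hdiag : Uᴴ * A * U =
      Matrix.diagonal (Fin.snoc (fun k : Fin n => (l k : ℂ)) 0)) :
    (A.submatrix Fin.castSucc Fin.castSucc).det =
      (∏ k : Fin n, (l k : ℂ)) *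
        ((U.submatrix Fin.castSucc Fin.castSucc) *
          (U.submatrix Fin.castSucc Fin.castSucc)ᴴ).det := by
  set B := U.submatrix Fin.castSucc Fin.castSucc
  have hM : A.submatrix Fin.castSucc Fin.castSucc = B * diagonal (fun k => (l k : ℂ)) * Bᴴ := by
    rw [eq_mul_mul_conjTranspose_of_unitary hU hdiag, mul_diagonal_snoc_zero_mul,
      submatrix_mul _ _ _ _ _ Function.bijective_id, submatrix_mul _ _ _ _ _ Function.bijective_id]
    rfl
  rw [hM, det_mul, det_mul, det_diagonal, det_mul]
  ring

/-- If a Hermitian matrix `A` is diagonalized as `U* A U = diag(λ_1,…,λ_{n-1},0)` with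
`U` unitary, then `det M_n = (∏ λ_k) · det (U_n U_n*)`, where `M_n` and `U_n` are the
top-left blocks of `A` and `U`. -/
theorem det_topLeft_block (n : ℕ)
    (A U : Matrix (Fin (n + 1)) (Fin (n + 1)) ℂ) (hA : A.IsHermitian)
    (hU : U ∈ Matrix.unitaryGroup (Fin (n + 1)) ℂ)
    (l : Fin n → ℝ)
    (hdiag : Uᴴ * A * U =
      Matrix.diagonal (Fin.snoc (fun k : Fin n => (l k : ℂ)) 0)) :
    (A.submatrix Fin.castSucc Fin.castSucc).det =
      (∏ k : Fin n, (l k : ℂ)) *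
        ((U.submatrix Fin.castSucc Fin.castSucc) *
          (U.submatrix Fin.castSucc Fin.castSucc)ᴴ).det :=
  det_topLeft_block_general n A U hU l hdiag
end
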